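/- If G is a finite simple graph of order n and size m without isolated vertices, then the restrained domination number satisfies γ_r(G) ≥ n − 2m/3. -/

import Mathlib

/-!
Let `S` be a restrained dominating set and `A = Sᶜ`. Every vertex of `A` has a neighbour in `S`
and one in `A`, so the degrees over `A` add up to at least `2|A|`, while the degrees over `S`
count every `S`–`A` edge, of which there are at least `|A|`. Hence `3|A| ≤ 2m`, i.e.
`|S| = n - |A| ≥ n - 2m/3`.
-/

open Finset

/-- A set `S` of vertices is a `(k,k',k'')`-dominating set if every vertex in `S` has at
least `k` neighbors in `S`, and every vertex not in `S` has at least `k'` neighbors in `S`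
and at least `k''` neighbors outside `S`. -/
def SimpleGraph.IsKkkDomSet {V : Type*} [Fintype V] [DecidableEq V] (G : SimpleGraph V)
    [DecidableRel G.Adj] (k k' k'' : ℕ) (S : Finset V) : Prop :=
  (∀ v ∈ S, k ≤ (G.neighborFinset v ∩ S).card) ∧
  (∀ v ∉ S, k' ≤ (G.neighborFinset v ∩ S).card ∧ k'' ≤ (G.neighborFinset v \ S).card)

/-- The `(k,k',k'')`-domination number: the minimum cardinality of a
`(k,k',k'')`-dominating set. -/
noncomputable def SimpleGraph.kkkDomNum {V : Type*} [Fintype V] [DecidableEq V]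
    (G : SimpleGraph V) [DecidableRel G.Adj] (k k' k'' : ℕ) : ℕ :=
  sInf {n | ∃ S : Finset V, G.IsKkkDomSet k k' k'' S ∧ S.card = n}

namespace SimpleGraph

variable {V : Type*} [Fintype V] [DecidableEq V] (G : SimpleGraph V) [DecidableRel G.Adj]

lemma degree_eq_card_inter_add_card_sdiff (S : Finset V) (v : V) :
    G.degree v = #(G.neighborFinset v ∩ S) + #(G.neighborFinset v \ S) :=
  (card_inter_add_card_sdiff _ _).symm

lemma sum_card_neighborFinset_inter_comm (S A : Finset V) :
    ∑ v ∈ S, #(G.neighborFinset v ∩ A) = ∑ v ∈ A, #(G.neighborFinset v ∩ S) := by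
  have inter_eq_above : ∀ v (B : Finset V), G.neighborFinset v ∩ B = B.bipartiteAbove G.Adj v := by
    intro v B
    ext u
    simp [and_comm]
  have inter_eq_below : ∀ v (B : Finset V), G.neighborFinset v ∩ B = B.bipartiteBelow G.Adj v := by
    intro v B
    ext u
    simp [and_comm, G.adj_comm]
  simpa only [← inter_eq_above, ← inter_eq_below] using
    sum_card_bipartiteAbove_eq_sum_card_bipartiteBelow G.Adj (s := S) (t := A)

lemma isKkkDomSet_univ (k' k'' : ℕ) : G.IsKkkDomSet 0 k' k'' univ :=
  ⟨fun _ _ => Nat.zero_le _, fun v hv => absurd (mem_univ v) hv⟩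

lemma exists_isKkkDomSet_card_eq_kkkDomNum (k' k'' : ℕ) :
    ∃ S, G.IsKkkDomSet 0 k' k'' S ∧ #S = G.kkkDomNum 0 k' k'' :=
  Nat.sInf_mem (s := {n | ∃ S : Finset V, G.IsKkkDomSet 0 k' k'' S ∧ #S = n})
    ⟨_, univ, G.isKkkDomSet_univ k' k'', rfl⟩

variable {G}

lemma IsKkkDomSet.add_le_degree {k k' k'' : ℕ} {S : Finset V} (hS : G.IsKkkDomSet k k' k'' S)
    {v : V} (hv : v ∉ S) : k' + k'' ≤ G.degree v := by
  rw [G.degree_eq_card_inter_add_card_sdiff S]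
  exact add_le_add (hS.2 v hv).1 (hS.2 v hv).2

theorem IsKkkDomSet.mul_card_add_mul_card_compl_le {k k' k'' : ℕ} {S : Finset V}
    (hS : G.IsKkkDomSet k k' k'' S) :
    k * #S + (2 * k' + k'') * #Sᶜ ≤ 2 * #G.edgeFinset := by
  have hin : k * #S ≤ ∑ v ∈ S, #(G.neighborFinset v ∩ S) := by
    simpa [mul_comm] using card_nsmul_le_sum S _ k hS.1
  have hcross : k' * #Sᶜ ≤ ∑ v ∈ S, #(G.neighborFinset v \ S) := by
    simp_rw [sdiff_eq_inter_compl, G.sum_card_neighborFinset_inter_comm S Sᶜ]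
    simpa [mul_comm] using card_nsmul_le_sum Sᶜ _ k' fun v hv => (hS.2 v (mem_compl.1 hv)).1
  have hout : (k' + k'') * #Sᶜ ≤ ∑ v ∈ Sᶜ, G.degree v := by
    simpa [mul_comm] using
      card_nsmul_le_sum Sᶜ _ (k' + k'') fun v hv => hS.add_le_degree (mem_compl.1 hv)
  have hdegS : ∑ v ∈ S, G.degree v =
      ∑ v ∈ S, #(G.neighborFinset v ∩ S) + ∑ v ∈ S, #(G.neighborFinset v \ S) := by
    rw [← sum_add_distrib]
    exact sum_congr rfl fun v _ => G.degree_eq_card_inter_add_card_sdiff S v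
  have htotal : ∑ v ∈ S, G.degree v + ∑ v ∈ Sᶜ, G.degree v = 2 * #G.edgeFinset := by
    rw [sum_add_sum_compl, G.sum_degrees_eq_twice_card_edges]
  nlinarith

end SimpleGraph

theorem stmt_14_general {V : Type*} [Fintype V] [DecidableEq V] (G : SimpleGraph V)
    [DecidableRel G.Adj] :
    (Fintype.card V : ℝ) - 2 * G.edgeFinset.card / 3 ≤ G.kkkDomNum 0 1 1 := by
  obtain ⟨S, hS, hcard⟩ := G.exists_isKkkDomSet_card_eq_kkkDomNum 1 1
  have hcompl : 3 * #Sᶜ ≤ 2 * #G.edgeFinset := by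
    simpa using hS.mul_card_add_mul_card_compl_le
  have hsplit : #Sᶜ + #S = Fintype.card V := card_compl_add_card S
  rw [← hcard]
  have hcompl' : (3 : ℝ) * #Sᶜ ≤ 2 * #G.edgeFinset := by exact_mod_cast hcompl
  have hsplit' : (#Sᶜ : ℝ) + #S = Fintype.card V := by exact_mod_cast hsplit
  linarith

/-- If G has no isolated vertices, then γ_r(G) = γ_{(0,1,1)}(G) ≥ n − 2m/3. -/
theorem stmt_14 {V : Type*} [Fintype V] [DecidableEq V] (G : SimpleGraph V)
    [DecidableRel G.Adj] (h : ∀ v : V, 0 < G.degree v) :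
    (Fintype.card V : ℝ) - 2 * G.edgeFinset.card / 3 ≤ G.kkkDomNum 0 1 1 :=
  stmt_14_general G
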